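/- Under the product Binomial(α, ϱ(·)) measure ν on {0,...,α}^{Λ_N} and for x ∈ Λ_N with x+1 ∈ Λ_N, the measure of the configuration η^{x,x+1} (one particle moved from x to x+1, assuming η(x) ≥ 1 and η(x+1) ≤ α−1) satisfies c_{x+1,x}(η^{x,x+1}) ν(η^{x,x+1}) = (1/a_x) c_{x,x+1}(η) ν(η), where a_x = [ϱ(x/N)(1−ϱ((x+1)/N))] / [ϱ((x+1)/N)(1−ϱ(x/N))]. -/

import Mathlib

/-!
`ν` is a product measure and the exchange changes only the sites `x` and `x + 1`, so
`ν(η^{x,x+1}) / ν(η)` is a product of two one-site ratios. Each is given by the detailed balance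
relation `(k + 1) w(k + 1) (1 - p) = (α - k) w(k) p` of the Binomial(α, p) weights `w`, and the
two factors `p`, `1 - p` of the sites `x`, `x + 1` combine into `1 / a_x`.
-/

open Finset

noncomputable def binomWeight (α : ℕ) (p : ℝ) (k : ℕ) : ℝ :=
  (α.choose k : ℝ) * p ^ k * (1 - p) ^ (α - k)

theorem binomWeight_pos {α k : ℕ} {p : ℝ} (hp0 : 0 < p) (hp1 : p < 1) (hk : k ≤ α) :
    0 < binomWeight α p k := by
  unfold binomWeight
  have : (0 : ℝ) < α.choose k := by exact_mod_cast Nat.choose_pos hk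
  have : 0 < 1 - p := sub_pos.mpr hp1
  positivity

theorem succ_mul_binomWeight_succ (α : ℕ) (p : ℝ) (k : ℕ) :
    ((k : ℝ) + 1) * binomWeight α p (k + 1) * (1 - p) = ((α : ℝ) - k) * binomWeight α p k * p := by
  unfold binomWeight
  rcases lt_or_ge k α with hk | hk
  · have hchoose : (α.choose (k + 1) : ℝ) * ((k : ℝ) + 1) = α.choose k * ((α : ℝ) - k) := by
      have h := congrArg (Nat.cast (R := ℝ)) (Nat.choose_succ_right_eq α k)
      push_cast [Nat.cast_sub hk.le] at h
      exact h
    have hexp : α - k = α - (k + 1) + 1 := by omega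
    rw [hexp, pow_succ, pow_succ]
    linear_combination p ^ k * p * (1 - p) ^ (α - (k + 1)) * (1 - p) * hchoose
  · rcases hk.eq_or_lt with rfl | hk
    · simp [Nat.choose_succ_self]
    · simp [Nat.choose_eq_zero_of_lt hk, Nat.choose_eq_zero_of_lt (hk.trans (Nat.lt_succ_self k))]

theorem prod_mul_prod_eq_of_eqOn_sdiff {ι M : Type*} [CommMonoid M] [DecidableEq ι]
    {s t : Finset ι} (hts : t ⊆ s) {f g : ι → M} (hfg : ∀ i ∈ s \ t, f i = g i) :
    (∏ i ∈ s, f i) * ∏ i ∈ t, g i = (∏ i ∈ s, g i) * ∏ i ∈ t, f i := by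
  rw [← prod_sdiff hts, ← prod_sdiff hts (f := g), prod_congr rfl hfg]
  ac_rfl

theorem prod_mul_mul_eq_of_eqOn_pair_compl {ι M : Type*} [CommMonoid M] [DecidableEq ι]
    {s : Finset ι} {a b : ι} (hab : a ≠ b) (ha : a ∈ s) (hb : b ∈ s) {f g : ι → M}
    (hfg : ∀ i ∈ s, i ≠ a → i ≠ b → f i = g i) :
    (∏ i ∈ s, f i) * (g a * g b) = (∏ i ∈ s, g i) * (f a * f b) := by
  rw [← prod_pair hab, ← prod_pair hab]
  refine prod_mul_prod_eq_of_eqOn_sdiff (insert_subset ha (singleton_subset_iff.mpr hb))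
    fun i hi => ?_
  obtain ⟨his, hiab⟩ := mem_sdiff.mp hi
  exact hfg i his (by simp_all) (by simp_all)

theorem change_of_variables_exchange_general (α N : ℕ) (ϱ : ℝ → ℝ)
    (hϱ : ∀ y ∈ Finset.Icc 1 (N - 1), 0 < ϱ ((y : ℝ) / N) ∧ ϱ ((y : ℝ) / N) < 1)
    (η : ℕ → ℕ) (hη : ∀ y, η y ≤ α)
    (x : ℕ) (hx : x ∈ Finset.Icc 1 (N - 1)) (hx1 : x + 1 ∈ Finset.Icc 1 (N - 1))
    (hx0 : 1 ≤ η x) :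
    let ν : (ℕ → ℕ) → ℝ := fun ζ => ∏ y ∈ Finset.Icc 1 (N - 1),
      (α.choose (ζ y) : ℝ) * ϱ ((y : ℝ) / N) ^ (ζ y) * (1 - ϱ ((y : ℝ) / N)) ^ (α - ζ y)
    let η' : ℕ → ℕ := fun z => if z = x then η x - 1 else if z = x + 1 then η (x + 1) + 1 else η z
    let ax : ℝ := (ϱ ((x : ℝ) / N) * (1 - ϱ (((x : ℝ) + 1) / N)))
      / (ϱ (((x : ℝ) + 1) / N) * (1 - ϱ ((x : ℝ) / N)))
    ((η' (x + 1) : ℝ) * ((α : ℝ) - (η' x : ℝ))) * ν η'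
      = (1 / ax) * ((η x : ℝ) * ((α : ℝ) - (η (x + 1) : ℝ))) * ν η := by
  intro ν η' ax
  obtain ⟨k, hk⟩ : ∃ k, η x = k + 1 := ⟨η x - 1, by omega⟩
  obtain ⟨hp0, hp1⟩ := hϱ x hx
  obtain ⟨hq0, hq1⟩ := hϱ (x + 1) hx1
  set m := η (x + 1)
  set p := ϱ ((x : ℝ) / N)
  set q := ϱ (((x + 1 : ℕ) : ℝ) / N)
  have hax : ax = p * (1 - q) / (q * (1 - p)) := by simp only [ax, p, q, Nat.cast_succ]
  have hη'x : η' x = k := by simp [η', hk]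
  have hη'x1 : η' (x + 1) = m + 1 := by simp [η', m]
  have hexchange : ν η' * (binomWeight α p (k + 1) * binomWeight α q m)
      = ν η * (binomWeight α p k * binomWeight α q (m + 1)) := by
    have := prod_mul_mul_eq_of_eqOn_pair_compl (by omega) hx hx1
      (f := fun y => binomWeight α (ϱ ((y : ℝ) / N)) (η' y))
      (g := fun y => binomWeight α (ϱ ((y : ℝ) / N)) (η y)) fun y _ hyx hyx1 => by
        simp [η', hyx, hyx1]
    rwa [hη'x, hη'x1, hk] at this
  have hbx := succ_mul_binomWeight_succ α p k
  have hbx1 := succ_mul_binomWeight_succ α q m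
  have hpos := mul_pos (binomWeight_pos hp0 hp1 (hk ▸ hη x)) (binomWeight_pos hq0 hq1 (hη (x + 1)))
  have : 1 - p ≠ 0 := by linarith
  have : 1 - q ≠ 0 := by linarith
  rw [hax, hη'x, hη'x1, hk]
  push_cast
  field_simp
  apply mul_right_cancel₀ hpos.ne'
  linear_combination (m + 1) * (α - k) * p * (1 - q) * hexchange
    + ν η * (α - k) * binomWeight α p k * p * hbx1
    - ν η * (α - m) * binomWeight α q m * q * hbx

/-- Change-of-variables identity for the product Binomial(α, ϱ(·)) measure under the
particle exchange `η ↦ η^{x,x+1}`: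
`c_{x+1,x}(η^{x,x+1}) ν(η^{x,x+1}) = (1/a_x) c_{x,x+1}(η) ν(η)`, where
`a_x = ϱ(x/N)(1-ϱ((x+1)/N)) / (ϱ((x+1)/N)(1-ϱ(x/N)))`. -/
theorem change_of_variables_exchange (α N : ℕ) (hN : 2 ≤ N) (ϱ : ℝ → ℝ)
    (hϱ : ∀ y ∈ Finset.Icc 1 (N - 1), 0 < ϱ ((y : ℝ) / N) ∧ ϱ ((y : ℝ) / N) < 1)
    (η : ℕ → ℕ) (hη : ∀ y, η y ≤ α)
    (x : ℕ) (hx : x ∈ Finset.Icc 1 (N - 1)) (hx1 : x + 1 ∈ Finset.Icc 1 (N - 1))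
    (hx0 : 1 ≤ η x) (hxα : η (x + 1) ≤ α - 1) (hα : 1 ≤ α) :
    let ν : (ℕ → ℕ) → ℝ := fun ζ => ∏ y ∈ Finset.Icc 1 (N - 1),
      (α.choose (ζ y) : ℝ) * ϱ ((y : ℝ) / N) ^ (ζ y) * (1 - ϱ ((y : ℝ) / N)) ^ (α - ζ y)
    let η' : ℕ → ℕ := fun z => if z = x then η x - 1 else if z = x + 1 then η (x + 1) + 1 else η z
    let ax : ℝ := (ϱ ((x : ℝ) / N) * (1 - ϱ (((x : ℝ) + 1) / N)))
      / (ϱ (((x : ℝ) + 1) / N) * (1 - ϱ ((x : ℝ) / N)))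
    ((η' (x + 1) : ℝ) * ((α : ℝ) - (η' x : ℝ))) * ν η'
      = (1 / ax) * ((η x : ℝ) * ((α : ℝ) - (η (x + 1) : ℝ))) * ν η :=
  change_of_variables_exchange_general α N ϱ hϱ η hη x hx hx1 hx0
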